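/- The Fubini equation holds when one of the valuations is simple: for dcpo's D and E, a Scott-open U ⊆ D × E, a simple valuation ν = Σᵢ rᵢ δ_{xᵢ} on D and any subprobability valuation ξ on E, ∫_{x∈D} ∫_{y∈E} χ_U(x,y) dξ dν = ∫_{y∈E} ∫_{x∈D} χ_U(x,y) dν dξ, and both sides equal Σᵢ rᵢ ∫_{y∈E} χ_U(xᵢ,y) dξ. -/

import Mathlib

/-- A set is Scott-open if it is an upper set inaccessible by suprema of
directed sets. -/
def ScottOpen {α : Type*} [Preorder α] (U : Set α) : Prop :=
  (∀ ⦃a b : α⦄, a ≤ b → a ∈ U → b ∈ U) ∧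
  ∀ d : Set α, d.Nonempty → DirectedOn (· ≤ ·) d → ∀ x : α, IsLUB d x → x ∈ U →
    (d ∩ U).Nonempty

/-- A preorder is a dcpo when every nonempty directed subset has a least upper
bound. -/
def IsDcpo (α : Type*) [Preorder α] : Prop :=
  ∀ d : Set α, d.Nonempty → DirectedOn (· ≤ ·) d → ∃ x : α, IsLUB d x

/-- A subprobability valuation on a dcpo (with its Scott topology): a
`[0,1]`-valued, strict, monotone, Scott-continuous, modular function on
Scott-open sets. -/
structure SVal (α : Type*) [Preorder α] where
  v : Set α → ℝ
  nonneg : ∀ U : Set α, ScottOpen U → 0 ≤ v U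
  le_one : ∀ U : Set α, ScottOpen U → v U ≤ 1
  strict : v ∅ = 0
  mono : ∀ ⦃U V : Set α⦄, ScottOpen U → ScottOpen V → U ⊆ V → v U ≤ v V
  cont : ∀ D : Set (Set α), (∀ U ∈ D, ScottOpen U) → D.Nonempty →
    DirectedOn (· ⊆ ·) D → v (⋃₀ D) = sSup (v '' D)
  modular : ∀ U V : Set α, ScottOpen U → ScottOpen V →
    v U + v V = v (U ∪ V) + v (U ∩ V)

/-- The stochastic order on subprobability valuations. -/
instance SVal.instPreorder {α : Type*} [Preorder α] : Preorder (SVal α) where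
  le ν₁ ν₂ := ∀ U : Set α, ScottOpen U → ν₁.v U ≤ ν₂.v U
  le_refl ν := fun _ _ => le_refl _
  le_trans ν₁ ν₂ ν₃ h₁ h₂ := fun U hU => le_trans (h₁ U hU) (h₂ U hU)

/-- The Choquet integral of `f` against the set-function `νv`:
`∫₀¹ νv (f⁻¹(t,∞)) dt`. -/
noncomputable def choquet {α : Type*} (νv : Set α → ℝ) (f : α → ℝ) : ℝ :=
  ∫ t in (0:ℝ)..1, νv (f ⁻¹' Set.Ioi t)

/-!
Against the simple valuation `ν = Σ rᵢ δ_{xᵢ}` the superlevel sets of `g` have mass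
`ν (g > t) = Σ rᵢ [t < g xᵢ]`, so the Choquet integral of any `g` with values in `[0,1]` is
`Σ rᵢ g xᵢ`. This evaluates the left-hand side, and turns the inner integral on the right into
the simple function `Σ rᵢ χ_{Uᵢ}` with `Uᵢ` the Scott-open slice of `U` at `xᵢ`. The Choquet
integral against `ξ` is additive on such simple functions: adding `c χ_W` to `g` replaces the
superlevel sets of `g` inside `W` by those of level `t - c`, and modularity of `ξ` turns this
shift into the extra term `c ξ(W)`.
-/

open Set intervalIntegral Classical

section ScottOpen

variable {α β : Type*} [Preorder α] [Preorder β] {U V : Set α}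

theorem scottOpen_iff_isUpperSet_and_dirSupInacc :
    ScottOpen U ↔ IsUpperSet U ∧ DirSupInacc U :=
  ⟨fun h => ⟨h.1, fun d hd hdir a ha => h.2 d hd hdir a ha⟩,
    fun h => ⟨h.1, fun _ hd hdir _ ha => h.2 hd hdir ha⟩⟩

theorem scottOpen_univ : ScottOpen (univ : Set α) :=
  scottOpen_iff_isUpperSet_and_dirSupInacc.2 ⟨isUpperSet_univ, .univ⟩

theorem scottOpen_empty : ScottOpen (∅ : Set α) :=
  scottOpen_iff_isUpperSet_and_dirSupInacc.2 ⟨isUpperSet_empty, .empty⟩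

theorem ScottOpen.union (hU : ScottOpen U) (hV : ScottOpen V) : ScottOpen (U ∪ V) := by
  rw [scottOpen_iff_isUpperSet_and_dirSupInacc] at *
  exact ⟨hU.1.union hV.1, hU.2.union hV.2⟩

theorem ScottOpen.inter (hU : ScottOpen U) (hV : ScottOpen V) : ScottOpen (U ∩ V) := by
  rw [scottOpen_iff_isUpperSet_and_dirSupInacc] at *
  exact ⟨hU.1.inter hV.1, hU.2.inter hV.2⟩

theorem ScottOpen.preimage {f : β → α} (hf : ScottContinuous f) (hU : ScottOpen U) :
    ScottOpen (f ⁻¹' U) := by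
  rw [scottOpen_iff_isUpperSet_and_dirSupInacc] at *
  refine ⟨hU.1.preimage hf.monotone, fun d hd hdir a ha haU => ?_⟩
  exact image_inter_nonempty_iff.1 <|
    hU.2 (hd.image f) (hdir.mono_comp fun _ _ h => hf.monotone h) (hf hd hdir ha) haU

end ScottOpen

theorem preimage_Ioi_add_mul_ite {α : Type*} {g : α → ℝ} {W : Set α} {c : ℝ} (hc : 0 ≤ c)
    (t : ℝ) :
    (fun b => g b + c * (if b ∈ W then 1 else 0)) ⁻¹' Ioi t =
      (g ⁻¹' Ioi (t - c) ∩ W) ∪ g ⁻¹' Ioi t := by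
  ext b
  by_cases hb : b ∈ W
  · simp only [hb, mem_preimage, mem_Ioi, mem_union, mem_inter_iff, if_true, mul_one, and_true]
    constructor
    · intro h
      exact .inl (by linarith)
    · rintro (h | h) <;> linarith
  · simp [hb]

section LowerSemicontinuous

variable {α : Type*} [Preorder α]

def ScottLowerSemicontinuous (f : α → ℝ) : Prop :=
  ∀ t, ScottOpen (f ⁻¹' Ioi t)

theorem scottLowerSemicontinuous_const (c : ℝ) :
    ScottLowerSemicontinuous fun _ : α => c := fun t => by
  rw [preimage_const]
  split_ifs
  exacts [scottOpen_univ, scottOpen_empty]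

theorem ScottLowerSemicontinuous.add_mul_ite {g : α → ℝ} {W : Set α} {c : ℝ}
    (hg : ScottLowerSemicontinuous g) (hW : ScottOpen W) (hc : 0 ≤ c) :
    ScottLowerSemicontinuous fun b => g b + c * (if b ∈ W then 1 else 0) := fun t => by
  rw [preimage_Ioi_add_mul_ite hc]
  exact ((hg _).inter hW).union (hg t)

theorem scottLowerSemicontinuous_sum_mul_ite {n : ℕ} {r : Fin n → ℝ} {V : Fin n → Set α}
    (hr : ∀ i, 0 ≤ r i) (hV : ∀ i, ScottOpen (V i)) :
    ScottLowerSemicontinuous fun b => ∑ i, r i * (if b ∈ V i then 1 else 0) := by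
  induction n with
  | zero => simpa using scottLowerSemicontinuous_const (α := α) 0
  | succ n ih =>
    simp_rw [Fin.sum_univ_castSucc]
    exact (ih (fun i => hr _) fun i => hV _).add_mul_ite (hV _) (hr _)

end LowerSemicontinuous

section Choquet

variable {α : Type*}

theorem antitone_ite_lt (c : ℝ) : Antitone fun t : ℝ => if t < c then (1 : ℝ) else 0 :=
  fun s t hst => by
    by_cases ht : t < c
    · simp [ht, hst.trans_lt ht]
    · simp only [ht, if_false]
      split_ifs <;> norm_num

theorem integral_ite_lt {c : ℝ} (hc : c ∈ Icc (0 : ℝ) 1) :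
    ∫ t in (0 : ℝ)..1, (if t < c then (1 : ℝ) else 0) = c := by
  rw [← integral_add_adjacent_intervals (antitone_ite_lt c).intervalIntegrable
      (antitone_ite_lt c).intervalIntegrable,
    integral_congr_Ioo_of_le hc.1 (g := fun _ => 1) fun t ht => if_pos ht.2,
    integral_congr_Ioo_of_le hc.2 (g := fun _ => 0) fun t ht => if_neg (not_lt.2 ht.1.le)]
  simp

theorem choquet_ite (μ : Set α → ℝ) (p : α → Prop) :
    choquet μ (fun b => if p b then 1 else 0) = μ {b | p b} := by
  have hlevel : ∀ t ∈ Ioo (0 : ℝ) 1,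
      (fun b => if p b then (1 : ℝ) else 0) ⁻¹' Ioi t = {b | p b} := fun t ht => by
    ext b
    by_cases hb : p b <;> simp [hb, ht.1.le, ht.2]
  rw [choquet, integral_congr_Ioo_of_le zero_le_one (g := fun _ => μ {b | p b})
    fun t ht => congrArg μ (hlevel t ht)]
  simp

theorem choquet_sum_dirac {n : ℕ} (r : Fin n → ℝ) (x : Fin n → α) {f : α → ℝ}
    (hf : ∀ i, f (x i) ∈ Icc (0 : ℝ) 1) :
    choquet (fun V => ∑ i, r i * (if x i ∈ V then 1 else 0)) f = ∑ i, r i * f (x i) := by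
  simp only [choquet, mem_preimage, mem_Ioi]
  rw [integral_finsetSum fun i _ => (antitone_ite_lt _).intervalIntegrable.const_mul (r i)]
  refine Finset.sum_congr rfl fun i _ => ?_
  rw [integral_const_mul, integral_ite_lt (hf i)]

end Choquet

namespace SVal

variable {α : Type*} [Preorder α] (ξ : SVal α)

theorem antitone_v_comp {S : ℝ → Set α} (hS : ∀ t, ScottOpen (S t)) (hanti : Antitone S) :
    Antitone fun t => ξ.v (S t) :=
  fun _ _ hst => ξ.mono (hS _) (hS _) (hanti hst)

theorem v_preimage_Ioi_add_mul_ite {g : α → ℝ} {W : Set α} {c : ℝ}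
    (hg : ScottLowerSemicontinuous g) (hW : ScottOpen W) (hc : 0 ≤ c) (t : ℝ) :
    ξ.v ((fun b => g b + c * (if b ∈ W then 1 else 0)) ⁻¹' Ioi t) =
      ξ.v (g ⁻¹' Ioi t) + ξ.v (g ⁻¹' Ioi (t - c) ∩ W) - ξ.v (g ⁻¹' Ioi t ∩ W) := by
  have hinter : (fun b => g b + c * (if b ∈ W then 1 else 0)) ⁻¹' Ioi t ∩ W =
      g ⁻¹' Ioi (t - c) ∩ W := by
    ext b
    by_cases hb : b ∈ W <;> simp [hb, sub_lt_iff_lt_add]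
  have hunion : (fun b => g b + c * (if b ∈ W then 1 else 0)) ⁻¹' Ioi t ∪ W =
      g ⁻¹' Ioi t ∪ W := by
    ext b
    by_cases hb : b ∈ W <;> simp [hb]
  have hmod_f := ξ.modular _ W (hg.add_mul_ite hW hc t) hW
  have hmod_g := ξ.modular _ W (hg t) hW
  rw [hinter, hunion] at hmod_f
  linarith

theorem choquet_add_mul_ite {g : α → ℝ} {W : Set α} {c : ℝ}
    (hg : ScottLowerSemicontinuous g) (hW : ScottOpen W) (hc : 0 ≤ c)
    (hg0 : ∀ b, 0 ≤ g b) (hg1 : ∀ b, g b ≤ 1 - c) :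
    choquet ξ.v (fun b => g b + c * (if b ∈ W then 1 else 0)) = choquet ξ.v g + c * ξ.v W := by
  set h : ℝ → ℝ := fun t => ξ.v (g ⁻¹' Ioi t ∩ W) with h_def
  have hlevel : Antitone fun t => g ⁻¹' Ioi t :=
    fun _ _ hst => preimage_mono (Ioi_subset_Ioi hst)
  have hF : Antitone fun t => ξ.v (g ⁻¹' Ioi t) := ξ.antitone_v_comp hg hlevel
  have hh : Antitone h := ξ.antitone_v_comp (fun t => (hg t).inter hW)
    fun _ _ hst => inter_subset_inter_left W (hlevel hst)
  have hh_shift : Antitone fun t => h (t - c) := fun _ _ hst => hh (by linarith)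
  have h_below : EqOn h (fun _ => ξ.v W) (Ioo (-c) 0) := fun t ht => by
    have : g ⁻¹' Ioi t = univ := eq_univ_of_forall fun b => ht.2.trans_le (hg0 b)
    simp only [h_def, this, univ_inter]
  have h_above : EqOn h (fun _ => 0) (Ioo (1 - c) 1) := fun t ht => by
    have : g ⁻¹' Ioi t = ∅ :=
      eq_empty_of_forall_notMem fun b hb => (hg1 b).not_gt (ht.1.trans hb)
    simp only [h_def, this, empty_inter, ξ.strict]
  have hshift : ∫ t in (0 : ℝ)..1, h (t - c) = c * ξ.v W + ∫ t in (0 : ℝ)..1, h t := by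
    rw [integral_comp_sub_right, zero_sub, ← sub_eq_iff_eq_add,
      integral_interval_sub_interval_comm hh.intervalIntegrable hh.intervalIntegrable
        hh.intervalIntegrable,
      integral_congr_Ioo_of_le (by linarith) h_below,
      integral_congr_Ioo_of_le (by linarith) h_above]
    simp
  rw [choquet, integral_congr fun t _ => ξ.v_preimage_Ioi_add_mul_ite hg hW hc t,
    integral_sub (hF.intervalIntegrable.add hh_shift.intervalIntegrable) hh.intervalIntegrable,
    integral_add hF.intervalIntegrable hh_shift.intervalIntegrable, hshift, choquet]
  ring

theorem choquet_sum_mul_ite {n : ℕ} {r : Fin n → ℝ} {V : Fin n → Set α}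
    (hr : ∀ i, 0 ≤ r i) (hsum : ∑ i, r i ≤ 1) (hV : ∀ i, ScottOpen (V i)) :
    choquet ξ.v (fun b => ∑ i, r i * (if b ∈ V i then 1 else 0)) = ∑ i, r i * ξ.v (V i) := by
  induction n with
  | zero => simpa [ξ.strict] using choquet_ite ξ.v fun _ => False
  | succ n ih =>
    rw [Fin.sum_univ_castSucc] at hsum
    have hterm : ∀ b i, r i * (if b ∈ V i then 1 else 0) ∈ Icc 0 (r i) := fun b i => by
      split_ifs <;> simp [hr i]
    have hg0 : ∀ b, 0 ≤ ∑ i : Fin n, r i.castSucc * (if b ∈ V i.castSucc then 1 else 0) :=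
      fun b => Finset.sum_nonneg fun i _ => (hterm b _).1
    have hg1 : ∀ b, ∑ i : Fin n, r i.castSucc * (if b ∈ V i.castSucc then 1 else 0) ≤
        1 - r (Fin.last n) := fun b => by
      linarith [Finset.sum_le_sum fun (i : Fin n) (_ : i ∈ Finset.univ) => (hterm b i.castSucc).2]
    simp_rw [Fin.sum_univ_castSucc]
    rw [ξ.choquet_add_mul_ite (scottLowerSemicontinuous_sum_mul_ite (fun i => hr _) fun i => hV _)
      (hV _) (hr _) hg0 hg1, ih (fun i => hr _) (by linarith [hr (Fin.last n)]) fun i => hV _]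

end SVal

open Classical in
theorem fubini_simple_valuation_general {D E : Type*} [PartialOrder D] [PartialOrder E]
    (U : Set (D × E)) (hU : ScottOpen U)
    (n : ℕ) (x : Fin n → D) (r : Fin n → ℝ)
    (hr : ∀ i, 0 < r i) (hsum : ∑ i, r i ≤ 1)
    (ξ : SVal E) :
    choquet (fun V : Set D => ∑ i, r i * (if x i ∈ V then (1:ℝ) else 0))
        (fun a => choquet ξ.v (fun b => if (a, b) ∈ U then (1:ℝ) else 0)) =
      choquet ξ.v
        (fun b => choquet (fun V : Set D => ∑ i, r i * (if x i ∈ V then (1:ℝ) else 0))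
          (fun a => if (a, b) ∈ U then (1:ℝ) else 0)) ∧
    choquet (fun V : Set D => ∑ i, r i * (if x i ∈ V then (1:ℝ) else 0))
        (fun a => choquet ξ.v (fun b => if (a, b) ∈ U then (1:ℝ) else 0)) =
      ∑ i, r i * choquet ξ.v (fun b => if (x i, b) ∈ U then (1:ℝ) else 0) := by
  have hslice (a : D) : ScottOpen (Prod.mk a ⁻¹' U) := hU.preimage (by fun_prop)
  have hleft := choquet_sum_dirac r x (f := fun a => ξ.v (Prod.mk a ⁻¹' U))
    fun i => ⟨ξ.nonneg _ (hslice _), ξ.le_one _ (hslice _)⟩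
  have hright := ξ.choquet_sum_mul_ite (fun i => (hr i).le) hsum fun i => hslice (x i)
  simp_rw [choquet_ite]
  -- the slices `{b | (a, b) ∈ U}` and `{a | (a, b) ∈ U}` left by `choquet_ite` are
  -- definitionally the preimages under `Prod.mk` used in `hleft` and `hright`
  exact ⟨hleft.trans hright.symm, hleft⟩

open Classical in
/-- Fubini for a simple valuation: for a Scott-open `U ⊆ D × E`, a simple
valuation `ν = Σᵢ rᵢ δ_{xᵢ}` on `D` and any subprobability valuation `ξ` on
`E`, the two iterated Choquet integrals of the characteristic function of `U`
agree, and both equal `Σᵢ rᵢ ∫_{y∈E} χ_U(xᵢ,y) dξ`. -/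
theorem fubini_simple_valuation {D E : Type*} [PartialOrder D] [PartialOrder E]
    (hD : IsDcpo D) (hE : IsDcpo E)
    (U : Set (D × E)) (hU : ScottOpen U)
    (n : ℕ) (x : Fin n → D) (r : Fin n → ℝ)
    (hr : ∀ i, 0 < r i) (hsum : ∑ i, r i ≤ 1)
    (ξ : SVal E) :
    choquet (fun V : Set D => ∑ i, r i * (if x i ∈ V then (1:ℝ) else 0))
        (fun a => choquet ξ.v (fun b => if (a, b) ∈ U then (1:ℝ) else 0)) =
      choquet ξ.v
        (fun b => choquet (fun V : Set D => ∑ i, r i * (if x i ∈ V then (1:ℝ) else 0))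
          (fun a => if (a, b) ∈ U then (1:ℝ) else 0)) ∧
    choquet (fun V : Set D => ∑ i, r i * (if x i ∈ V then (1:ℝ) else 0))
        (fun a => choquet ξ.v (fun b => if (a, b) ∈ U then (1:ℝ) else 0)) =
      ∑ i, r i * choquet ξ.v (fun b => if (x i, b) ∈ U then (1:ℝ) else 0) :=
  fubini_simple_valuation_general U hU n x r hr hsum ξ
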